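/- arXiv:1003.3736 — 11 statements merged into one kernel-verified Lean document; each statement's English description precedes it below -/
import Mathlib

section
/- Let K₁ be a Kakeya set of rank r₁ in F^(n-(r-r₁)), considered as a subspace of F^n, and let K := K₁ ∪ (F^n \ F^(n-(r-r₁))). Then K is a Kakeya set of rank r in F^n. -/
/-!
Let `W ≤ F^n` be the image of `F^(n-(r-r₁))` and `L` an `r`-dimensional subspace. If `L + W` is a
proper subspace, a translate of `L` by a vector outside `L + W` misses `W` altogether. Otherwise
`dim (L ∩ W) = r + dim W - n = r₁`, so some translate `v + (L ∩ W)` with `v ∈ W` lies in `K₁`, and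
then `v + L` meets `W` exactly in `v + (L ∩ W)`.
-/

/-- `K` is a Kakeya set of rank `r`: it contains a translate of every
`r`-dimensional subspace. -/
def IsKakeya (F : Type) {V : Type} [Field F] [AddCommGroup V] [Module F V]
    (r : ℕ) (K : Set V) : Prop :=
  ∀ L : Submodule F V, Module.finrank F L = r → ∃ v : V, ∀ x ∈ L, v + x ∈ K

open Module

theorem Submodule.exists_add_notMem_of_sup_ne_top {R V : Type*} [Ring R] [AddCommGroup V]
    [Module R V] {L W : Submodule R V} (h : L ⊔ W ≠ ⊤) : ∃ v : V, ∀ x ∈ L, v + x ∉ W := by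
  obtain ⟨v, -, hv⟩ := SetLike.exists_of_lt (lt_top_iff_ne_top.mpr h)
  refine ⟨v, fun x hx hvx => hv ?_⟩
  simpa using sub_mem (mem_sup_right hvx) (mem_sup_left hx : x ∈ L ⊔ W)

section Kakeya

variable {F U V : Type} [Field F] [AddCommGroup U] [Module F U] [AddCommGroup V] [Module F V]

theorem IsKakeya.exists_add_mem_image {r : ℕ} {K : Set U} (hK : IsKakeya F r K) {f : U →ₗ[F] V}
    (hf : Function.Injective f) {M : Submodule F V} (hMf : M ≤ LinearMap.range f)
    (hM : finrank F M = r) : ∃ u : U, ∀ x ∈ M, f u + x ∈ f '' K := by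
  have hmap : (M.comap f).map f = M := Submodule.map_comap_eq_of_le hMf
  have hrank : finrank F (M.comap f) = r := by
    rw [(Submodule.equivMapOfInjective f hf _).finrank_eq, hmap, hM]
  obtain ⟨u, hu⟩ := hK _ hrank
  refine ⟨u, fun x hx => ?_⟩
  obtain ⟨y, hy, rfl⟩ := hmap.ge hx
  exact ⟨u + y, hu y hy, map_add f u y⟩

-- `hdim`: the codimension of `f` is `r - r₁`, written without truncated subtraction.
theorem IsKakeya.image_union_compl_range [FiniteDimensional F V] {r r₁ : ℕ} {K : Set U}
    (hK : IsKakeya F r₁ K) {f : U →ₗ[F] V} (hf : Function.Injective f)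
    (hdim : finrank F U + r = finrank F V + r₁) :
    IsKakeya F r (f '' K ∪ (Set.range f)ᶜ) := by
  intro L hL
  by_cases hLW : L ⊔ LinearMap.range f = ⊤
  · have hinf : finrank F ↥(L ⊓ LinearMap.range f) = r₁ := by
      have := Submodule.finrank_sup_add_finrank_inf_eq L (LinearMap.range f)
      rw [hLW, finrank_top, hL, LinearMap.finrank_range_of_inj hf] at this
      omega
    obtain ⟨u, hu⟩ := hK.exists_add_mem_image hf inf_le_right hinf
    refine ⟨f u, fun x hx => or_iff_not_imp_right.mpr fun hux => hu x ⟨hx, ?_⟩⟩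
    have hux' : f u + x ∈ LinearMap.range f := not_not.mp hux
    simpa using sub_mem hux' (LinearMap.mem_range_self f u)
  · obtain ⟨v, hv⟩ := Submodule.exists_add_notMem_of_sup_ne_top hLW
    exact ⟨v, fun x hx => Or.inr (hv x hx)⟩

end Kakeya

def Fin.extendByZero (R : Type*) [Semiring R] (m n : ℕ) :
    (Fin m → R) →ₗ[R] (Fin n → R) where
  toFun x i := if h : (i : ℕ) < m then x ⟨i, h⟩ else 0
  map_add' x y := by
    funext i
    by_cases h : (i : ℕ) < m <;> simp [h]
  map_smul' c x := by
    funext i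
    by_cases h : (i : ℕ) < m <;> simp [h]

theorem Fin.extendByZero_injective (R : Type*) [Semiring R] {m n : ℕ} (hmn : m ≤ n) :
    Function.Injective (Fin.extendByZero R m n) := by
  intro x y hxy
  funext j
  simpa [Fin.extendByZero] using congrFun hxy (Fin.castLE hmn j)

theorem kakeya_lifting_general {F : Type} [Field F] (n r r₁ : ℕ)
    (h2 : r₁ ≤ r) (h3 : r ≤ n)
    (e : (Fin (n - (r - r₁)) → F) → (Fin n → F))
    (he : e = fun (x : Fin (n - (r - r₁)) → F) (i : Fin n) => if h : (i : ℕ) < n - (r - r₁) then x ⟨i, h⟩ else 0)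
    (K₁ : Set (Fin (n - (r - r₁)) → F)) (hK₁ : IsKakeya F r₁ K₁) :
    IsKakeya F r (e '' K₁ ∪ (Set.range e)ᶜ) := by
  have he' : e = Fin.extendByZero F (n - (r - r₁)) n := he
  rw [he']
  refine hK₁.image_union_compl_range (Fin.extendByZero_injective F (Nat.sub_le n (r - r₁))) ?_
  simp only [finrank_fin_fun]
  omega

theorem kakeya_lifting {F : Type} [Field F] (n r r₁ : ℕ)
    (h1 : 1 ≤ r₁) (h2 : r₁ ≤ r) (h3 : r ≤ n)
    (e : (Fin (n - (r - r₁)) → F) → (Fin n → F))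
    (he : e = fun (x : Fin (n - (r - r₁)) → F) (i : Fin n) => if h : (i : ℕ) < n - (r - r₁) then x ⟨i, h⟩ else 0)
    (K₁ : Set (Fin (n - (r - r₁)) → F)) (hK₁ : IsKakeya F r₁ K₁) :
    IsKakeya F r (e '' K₁ ∪ (Set.range e)ᶜ) :=
  kakeya_lifting_general n r r₁ h2 h3 e he K₁ hK₁
end

section
/- If K₁ ⊆ F_q^m and K₂ ⊆ F_q^n are Kakeya sets of rank r, then K₁ × K₂ is a Kakeya set of rank r in F_q^(m+n). -/
open Module

theorem Submodule.exists_le_finrank_eq {F V : Type*} [Field F] [AddCommGroup V] [Module F V]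
    [FiniteDimensional F V] (W : Submodule F V) {r : ℕ} (hW : finrank F W ≤ r)
    (hr : r ≤ finrank F V) : ∃ W' : Submodule F V, W ≤ W' ∧ finrank F W' = r := by
  induction r, hW using Nat.le_induction with
  | base => exact ⟨W, le_rfl, rfl⟩
  | succ r _ ih =>
    obtain ⟨W', hWW', hW'⟩ := ih (by omega)
    obtain ⟨x, -, hx⟩ := SetLike.exists_of_lt (lt_top_of_finrank_lt_finrank (s := W') (by omega))
    exact ⟨W' ⊔ span F {x}, hWW'.trans le_sup_left, by rw [finrank_sup_span_singleton hx, hW']⟩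

theorem IsKakeya.exists_translate_of_finrank_le {F V : Type} [Field F] [AddCommGroup V]
    [Module F V] [FiniteDimensional F V] {r : ℕ} {K : Set V} (hK : IsKakeya F r K)
    (hr : r ≤ finrank F V) (W : Submodule F V) (hW : finrank F W ≤ r) :
    ∃ v : V, ∀ x ∈ W, v + x ∈ K := by
  obtain ⟨W', hWW', hW'⟩ := W.exists_le_finrank_eq hW hr
  obtain ⟨v, hv⟩ := hK W' hW'
  exact ⟨v, fun x hx => hv x (hWW' hx)⟩

theorem IsKakeya.prod {F V W : Type} [Field F] [AddCommGroup V] [Module F V]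
    [AddCommGroup W] [Module F W] [FiniteDimensional F V] [FiniteDimensional F W] {r : ℕ}
    {K₁ : Set V} {K₂ : Set W} (h₁ : IsKakeya F r K₁) (h₂ : IsKakeya F r K₂)
    (hV : r ≤ finrank F V) (hW : r ≤ finrank F W) : IsKakeya F r (K₁ ×ˢ K₂) := by
  intro L hL
  obtain ⟨v₁, hv₁⟩ := h₁.exists_translate_of_finrank_le hV (L.map (LinearMap.fst F V W))
    (hL ▸ Submodule.finrank_map_le _ _)
  obtain ⟨v₂, hv₂⟩ := h₂.exists_translate_of_finrank_le hW (L.map (LinearMap.snd F V W))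
    (hL ▸ Submodule.finrank_map_le _ _)
  exact ⟨(v₁, v₂), fun x hx => ⟨hv₁ x.1 ⟨x, hx, rfl⟩, hv₂ x.2 ⟨x, hx, rfl⟩⟩⟩

theorem kakeya_product_general {F : Type} [Field F] (m n r : ℕ)
    (hm : r ≤ m) (hn : r ≤ n)
    (K₁ : Set (Fin m → F)) (K₂ : Set (Fin n → F))
    (h1 : IsKakeya F r K₁) (h2 : IsKakeya F r K₂) :
    IsKakeya F r (K₁ ×ˢ K₂) :=
  h1.prod h2 (by rwa [finrank_fin_fun]) (by rwa [finrank_fin_fun])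

theorem kakeya_product {F : Type} [Field F] [Fintype F] (m n r : ℕ)
    (hr : 1 ≤ r) (hm : r ≤ m) (hn : r ≤ n)
    (K₁ : Set (Fin m → F)) (K₂ : Set (Fin n → F))
    (h1 : IsKakeya F r K₁) (h2 : IsKakeya F r K₂) :
    IsKakeya F r (K₁ ×ˢ K₂) :=
  kakeya_product_general m n r hm hn K₁ K₂ h1 h2
end

section
/- Suppose q is an even power of 2 and f(x) = x³. Then for every t ∈ F_q, the set I_f(t) = {x³ + t·x : x ∈ F_q} has at most (2q+1)/3 elements. -/
/-!
Write `g x = x ^ 3 + t * x`. A cubic has fibres of size at most `3`, so if `N` counts the ordered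
pairs `x ≠ y` with `g x = g y`, summing `3 + n (n - 1) ≤ 3 n` over the fibre sizes `n ∈ {1, 2, 3}`
gives `3 |I_f(t)| + N ≤ 3 q`. In characteristic `2`, `g x - g y = (x + y) (x ^ 2 + x y + y ^ 2 + t)`,
and since `3 ∣ q - 1` there is a cube root of unity `ω`, which splits the conic
`x ^ 2 + x y + y ^ 2 = t` as `(x + ω y) (x + ω ^ 2 y) = t`. Parametrising it by `x + ω y = u ≠ 0`
yields `q - 1` points, of which at most one lies on the diagonal, so `N ≥ q - 2` and
`3 |I_f(t)| ≤ 2 q + 2`.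
-/

open Finset Polynomial

theorem card_filter_cubic_eq_le_three {R : Type*} [CommRing R] [IsDomain R] [DecidableEq R]
    (s : Finset R) (t c : R) : #{x ∈ s | x ^ 3 + t * x = c} ≤ 3 := by
  set p : R[X] := C 1 * X ^ 3 + C 0 * X ^ 2 + C t * X + C (-c)
  have hdeg : p.natDegree = 3 := natDegree_cubic one_ne_zero
  have hp : p ≠ 0 := ne_zero_of_natDegree_gt (n := 0) (by omega)
  refine (card_le_degree_of_subset_roots fun x hx => ?_).trans hdeg.le
  obtain ⟨-, hxc⟩ := mem_filter.1 hx
  rw [mem_roots hp, IsRoot.def]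
  simp [p, ← hxc]

theorem three_mul_card_image_add_card_collisions_le {α β : Type*} [DecidableEq α] [DecidableEq β]
    (f : α → β) (s : Finset α) (hf : ∀ c, #{x ∈ s | f x = c} ≤ 3) :
    3 * #(s.image f) + #{p ∈ s.offDiag | f p.1 = f p.2} ≤ 3 * #s := by
  have hpairs : #{p ∈ s.offDiag | f p.1 = f p.2} =
      ∑ c ∈ s.image f, #({x ∈ s | f x = c}.offDiag) := by
    rw [card_eq_sum_card_fiberwise (f := fun p => f p.1)
      fun p hp => mem_image_of_mem f (mem_offDiag.1 (mem_filter.1 hp).1).1]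
    refine sum_congr rfl fun c _ => congrArg card ?_
    ext ⟨x, y⟩
    simp only [mem_filter, mem_offDiag]
    constructor
    · rintro ⟨⟨⟨hx, hy, hxy⟩, hfxy⟩, rfl⟩
      exact ⟨⟨hx, rfl⟩, ⟨hy, hfxy.symm⟩, hxy⟩
    · rintro ⟨⟨hx, rfl⟩, ⟨hy, hfy⟩, hxy⟩
      exact ⟨⟨⟨hx, hy, hxy⟩, hfy.symm⟩, rfl⟩
  have hfibre : ∀ c ∈ s.image f, 3 + #({x ∈ s | f x = c}.offDiag) ≤ 3 * #{x ∈ s | f x = c} := by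
    intro c hc
    obtain ⟨x, hx, rfl⟩ := mem_image.1 hc
    have hpos : 0 < #{y ∈ s | f y = f x} := card_pos.2 ⟨x, mem_filter.2 ⟨hx, rfl⟩⟩
    have hle := hf (f x)
    rw [offDiag_card]
    interval_cases #{y ∈ s | f y = f x} <;> norm_num
  calc 3 * #(s.image f) + #{p ∈ s.offDiag | f p.1 = f p.2}
      = ∑ c ∈ s.image f, (3 + #({x ∈ s | f x = c}.offDiag)) := by
        rw [sum_add_distrib, sum_const, smul_eq_mul, hpairs, mul_comm]
    _ ≤ ∑ c ∈ s.image f, 3 * #{x ∈ s | f x = c} := sum_le_sum hfibre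
    _ = 3 * #s := by rw [← mul_sum, ← card_eq_sum_card_image]

theorem exists_sq_add_self_add_one_eq_zero {F : Type*} [Field F] [Fintype F]
    (h : Fintype.card F % 3 = 1) : ∃ ω : F, ω ^ 2 + ω + 1 = 0 := by
  classical
  obtain ⟨ζ, hζ⟩ := exists_prime_orderOf_dvd_card (G := Fˣ) 3 (by rw [Fintype.card_units]; omega)
  have hprim : IsPrimitiveRoot (ζ : F) 3 := by
    rw [← hζ, ← orderOf_units]
    exact IsPrimitiveRoot.orderOf _
  exact ⟨ζ, by simpa [cyclotomic_three] using hprim.isRoot_cyclotomic (by norm_num)⟩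

namespace CharTwo

variable {R : Type*} [CommRing R] [CharP R 2]

theorem cubic_add_mul_eq_of_sq_add_mul_add_sq_eq {t x y : R} (h : x ^ 2 + x * y + y ^ 2 = t) :
    x ^ 3 + t * x = y ^ 3 + t * y := by
  linear_combination (x - y) * h + t * (x - y) * two_eq_zero (R := R)

variable {ω : R} (hω : ω ^ 2 + ω + 1 = 0) (u w : R)
include hω

/-- `x = ω ^ 2 u + ω w`, `y = u + w` solve `x + ω y = u`, `x + ω ^ 2 y = w`. -/
theorem sq_add_mul_add_sq_of_cubeRoot :
    (ω ^ 2 * u + ω * w) ^ 2 + (ω ^ 2 * u + ω * w) * (u + w) + (u + w) ^ 2 = u * w := by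
  linear_combination (u ^ 2 * (ω ^ 2 - ω + 1) + u * w * (2 * ω - 1) + w ^ 2) * hω
    + u * w * two_eq_zero (R := R)

theorem add_cubeRoot_mul_eq : ω ^ 2 * u + ω * w + ω * (u + w) = u := by
  linear_combination u * hω + (ω * w - u) * two_eq_zero (R := R)

theorem eq_cubeRoot_mul_of_eq (h : ω ^ 2 * u + ω * w = u + w) : u = ω * w := by
  linear_combination ω ^ 2 * h + (u * (1 + ω - ω ^ 2) + w * (2 - ω)) * hω
    + (-ω * u - (ω + 1) * w) * two_eq_zero (R := R)

end CharTwo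

open CharTwo in
theorem card_sub_two_le_card_cubic_collisions {F : Type*} [Field F] [Fintype F] [DecidableEq F]
    [CharP F 2] {ω : F} (hω : ω ^ 2 + ω + 1 = 0) (t : F) :
    Fintype.card F - 2 ≤ #{p ∈ univ.offDiag | p.1 ^ 3 + t * p.1 = p.2 ^ 3 + t * p.2} := by
  obtain ⟨u₀, hu₀⟩ := isSquare_of_charTwo' (ω * t)
  have hcard : Fintype.card F - 2 ≤ #(univ \ {0, u₀}) := by
    rw [card_sdiff_of_subset (subset_univ _), card_univ]
    exact Nat.sub_le_sub_left card_le_two _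
  refine hcard.trans (card_le_card_of_injOn (fun u => (ω ^ 2 * u + ω * (t / u), u + t / u))
    (fun u hu => ?_) fun a _ b _ hab => ?_)
  · simp only [coe_sdiff, coe_univ, coe_insert, coe_singleton, Set.mem_sdiff, Set.mem_univ,
      Set.mem_insert_iff, Set.mem_singleton_iff, not_or, true_and] at hu
    obtain ⟨hu0, huu₀⟩ := hu
    have hut : u * (t / u) = t := mul_div_cancel₀ t hu0
    simp only [coe_filter, mem_offDiag, mem_univ, true_and, Set.mem_ofPred_eq]
    refine ⟨fun hxy => huu₀ ?_, cubic_add_mul_eq_of_sq_add_mul_add_sq_eq ?_⟩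
    · refine sq_inj.1 ?_
      linear_combination u * eq_cubeRoot_mul_of_eq hω u (t / u) hxy + ω * hut + hu₀
    · rw [sq_add_mul_add_sq_of_cubeRoot hω, hut]
  · rw [← add_cubeRoot_mul_eq hω a (t / a), ← add_cubeRoot_mul_eq hω b (t / b)]
    simp only [Prod.mk.injEq] at hab
    rw [hab.1, hab.2]

theorem card_image_cubic_le {F : Type*} [Field F] [Fintype F] [DecidableEq F] [CharP F 2]
    (hq : Fintype.card F % 3 = 1) (t : F) :
    #(univ.image fun x => x ^ 3 + t * x) ≤ (2 * Fintype.card F + 1) / 3 := by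
  obtain ⟨ω, hω⟩ := exists_sq_add_self_add_one_eq_zero hq
  have hcount := three_mul_card_image_add_card_collisions_le (fun x : F => x ^ 3 + t * x) univ
    (card_filter_cubic_eq_le_three univ t)
  have hcoll := card_sub_two_le_card_cubic_collisions hω t
  rw [card_univ] at hcount
  omega

theorem If_card_even_power_of_two_general {F : Type} [Field F] [Fintype F] [DecidableEq F]
    (k : ℕ) (hcard : Fintype.card F = 2 ^ (2 * k)) (t : F) :
    (Finset.image (fun x => x ^ 3 + t * x) Finset.univ).card ≤
      (2 * Fintype.card F + 1) / 3 := by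
  have : CharP F 2 := charP_of_card_eq_prime_pow hcard
  refine card_image_cubic_le ?_ t
  norm_num [hcard, pow_mul, Nat.pow_mod]

theorem If_card_even_power_of_two {F : Type} [Field F] [Fintype F] [DecidableEq F]
    (k : ℕ) (hk : 1 ≤ k) (hcard : Fintype.card F = 2 ^ (2 * k)) (t : F) :
    (Finset.image (fun x => x ^ 3 + t * x) Finset.univ).card ≤
      (2 * Fintype.card F + 1) / 3 :=
  If_card_even_power_of_two_general k hcard t
end

section
/- For every prime power q and every function f: F_q → F_q, there exists t ∈ F_q such that |I_f(t)| > q/2, where I_f(t) := {f(x) + t·x : x ∈ F_q}. -/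
/-!
For a map `g` on a finite set `X`, Cauchy–Schwarz over the fibres gives
`|X|² ≤ |g(X)| · E(g)`, where `E(g)` counts the ordered pairs `(x, y)` with `g x = g y`.
For `g = f + t • id`, a pair with `x ≠ y` collides for exactly one slope `t`, so the collision counts
sum to `q² + (q² - q)` over all `t ∈ F_q`. Some `t` therefore has `E ≤ 2q - 1`, and then
`|I_f(t)| ≥ q² / (2q - 1) > q / 2`.
-/

open Finset

section Collisions

variable {α β : Type*} [Fintype α] [DecidableEq β]

def collisions (g : α → β) : Finset (α × α) := {p | g p.1 = g p.2}

theorem card_collisions_eq_sum_sq (g : α → β) :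
    #(collisions g) = ∑ b ∈ univ.image g, #{x | g x = b} ^ 2 := by
  rw [card_eq_sum_card_fiberwise (f := fun p => g p.1) (t := univ.image g)
    (fun p _ => mem_image_of_mem g (mem_univ _))]
  refine sum_congr rfl fun b _ => ?_
  rw [sq, ← card_product]
  congr 1
  ext ⟨x, y⟩
  simp only [collisions, mem_filter, mem_univ, true_and, mem_product]
  constructor
  · rintro ⟨hxy, rfl⟩; exact ⟨rfl, hxy.symm⟩
  · rintro ⟨hx, hy⟩; exact ⟨hx.trans hy.symm, hx⟩

theorem sq_card_le_card_image_mul_card_collisions (g : α → β) :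
    Fintype.card α ^ 2 ≤ #(univ.image g) * #(collisions g) := by
  rw [card_collisions_eq_sum_sq, ← card_univ, card_eq_sum_card_image g univ]
  exact sq_sum_le_card_mul_sum_sq

end Collisions

section AffineShifts

variable {F : Type*} [Field F] [Fintype F] [DecidableEq F]

theorem card_filter_add_mul_eq_add_mul {a b : F} (c d : F) (hab : a ≠ b) :
    #{t | c + t * a = d + t * b} = 1 := by
  have hab' : a - b ≠ 0 := sub_ne_zero.mpr hab
  rw [card_eq_one]
  refine ⟨(d - c) / (a - b), ?_⟩
  ext t
  simp only [mem_filter, mem_univ, true_and, mem_singleton, eq_div_iff hab']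
  constructor <;> intro h <;> linear_combination h

theorem sum_card_collisions_add_mul (f : F → F) :
    ∑ t : F, #(collisions fun x => f x + t * x) =
      Fintype.card F * (2 * Fintype.card F - 1) := by
  have hcount : ∀ p : F × F, #{t : F | f p.1 + t * p.1 = f p.2 + t * p.2} =
      if p.1 = p.2 then Fintype.card F else 1 := by
    rintro ⟨x, y⟩
    split_ifs with h
    · obtain rfl : x = y := h
      simp
    · exact card_filter_add_mul_eq_add_mul _ _ h
  have hdiag : #{p : F × F | p.1 = p.2} = Fintype.card F := by
    rw [← univ_product_univ, ← diag_eq_filter, diag_card, card_univ]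
  have hsplit := card_filter_add_card_filter_not (s := (univ : Finset (F × F)))
    (fun p => p.1 = p.2)
  simp only [collisions, card_filter]
  rw [sum_comm]
  simp only [← card_filter, hcount]
  rw [sum_ite]
  simp only [sum_const, smul_eq_mul, mul_one, card_univ, Fintype.card_prod, hdiag]
    at hsplit ⊢
  rw [Nat.mul_sub_one, mul_left_comm]
  omega

theorem exists_card_collisions_add_mul_le (f : F → F) :
    ∃ t : F, #(collisions fun x => f x + t * x) ≤ 2 * Fintype.card F - 1 := by
  obtain ⟨t, -, ht⟩ := exists_le_of_sum_le (s := univ) univ_nonempty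
    (f := fun t : F => #(collisions fun x => f x + t * x))
    (g := fun _ => 2 * Fintype.card F - 1)
    (by rw [sum_card_collisions_add_mul, sum_const, card_univ, smul_eq_mul])
  exact ⟨t, ht⟩

end AffineShifts

theorem exists_large_If {F : Type} [Field F] [Fintype F] [DecidableEq F] (f : F → F) :
    ∃ t : F, (Fintype.card F : ℝ) / 2 <
      (Finset.image (fun x => f x + t * x) Finset.univ).card := by
  obtain ⟨t, hE⟩ := exists_card_collisions_add_mul_le f
  refine ⟨t, ?_⟩
  have hCS := sq_card_le_card_image_mul_card_collisions fun x => f x + t * x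
  set q := Fintype.card F
  set m := #(univ.image fun x => f x + t * x)
  set E := #(collisions fun x => f x + t * x)
  have hq : 0 < q := Fintype.card_pos
  have hlt : q < 2 * m := by
    by_contra! h
    have h₁ : 2 * m * E ≤ q * E := Nat.mul_le_mul_right E h
    have h₂ : q * E < q * (2 * q) := Nat.mul_lt_mul_of_pos_left (by omega) hq
    linarith
  rw [div_lt_iff₀ two_pos]
  exact_mod_cast (by omega : q < m * 2)
end

section
/- Let q be a prime power and n, k ≥ 1 integers with k ≤ q^n. There exists a set U ⊆ F_q^n of size exactly (1 - (1 - q^(-⌊n/k⌋))^k) · q^n such that U contains a translate of every k-element subset of F_q^n. -/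
/-!
Split the coordinates of `F^n` into `k` blocks of size `m = ⌊n/k⌋` and a remainder of size
`n - k m`, and let `U` be the set of vectors vanishing on at least one block. Given
`S = {a₁, …, a_k}`, the translate `b` equal to `-aᵢ` on the `i`-th block (and `0` on the
remainder) sends `aᵢ` into `U`, a diagonal argument. The complement of `U` consists of the
vectors that are nonzero on every block, so it has `(q^m - 1)^k q^(n - k m)` elements.
-/

open Finset Fintype

section ZeroCoord

variable (ι W : Type*) [Fintype ι] [DecidableEq ι] [Zero W] [Fintype W] [DecidableEq W]

def zeroCoordSet : Finset (ι → W) := {f | ∃ i, f i = 0}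

theorem zeroCoordSet_eq_compl_piFinset :
    zeroCoordSet ι W = (piFinset fun _ : ι ↦ ({0}ᶜ : Finset W))ᶜ := by
  ext f
  simp [zeroCoordSet]

theorem card_zeroCoordSet :
    #(zeroCoordSet ι W) = card W ^ card ι - (card W - 1) ^ card ι := by
  simp [zeroCoordSet_eq_compl_piFinset, card_compl, card_piFinset, Finset.card_univ]

end ZeroCoord

theorem exists_add_mem_zeroCoordSet {ι W : Type*} [Fintype ι] [DecidableEq ι] [AddGroup W]
    [Fintype W] [DecidableEq W] (a : ι → ι → W) :
    ∃ b : ι → W, ∀ i, b + a i ∈ zeroCoordSet ι W :=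
  ⟨fun i ↦ -a i i, fun i ↦ mem_filter.2 ⟨mem_univ _, i, by simp⟩⟩

theorem exists_finset_card_eq_forall_exists_add_mem {ι W R V : Type*} [Fintype ι]
    [DecidableEq ι] [AddGroup W] [Fintype W] [DecidableEq W] [AddGroup R] [Fintype R]
    [AddGroup V] (e : V ≃+ (ι → W) × R) :
    ∃ U : Finset V, #U = (card W ^ card ι - (card W - 1) ^ card ι) * card R ∧
      ∀ a : ι → V, ∃ b, ∀ i, b + a i ∈ U := by
  refine ⟨(zeroCoordSet ι W ×ˢ univ).map e.symm.toEquiv.toEmbedding, ?_, fun a ↦ ?_⟩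
  · rw [card_map, card_product, card_zeroCoordSet, Finset.card_univ]
  · obtain ⟨b, hb⟩ := exists_add_mem_zeroCoordSet fun i ↦ (e (a i)).1
    refine ⟨e.symm (b, 0), fun i ↦ ?_⟩
    rw [mem_map_equiv]
    simpa using hb i

def blockAddEquiv (M : Type*) [Add M] {κ ι μ ρ : Type*} (σ : κ ≃ (ι × μ) ⊕ ρ) :
    (κ → M) ≃+ (ι → μ → M) × (ρ → M) :=
  { (σ.arrowCongr (Equiv.refl M)).trans <| (Equiv.sumArrowEquivProdArrow _ _ M).trans <|
      (Equiv.curry _ _ M).prodCongr (Equiv.refl _) with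
    map_add' := fun _ _ ↦ rfl }

def finBlockEquiv (n k : ℕ) : Fin n ≃ (Fin k × Fin (n / k)) ⊕ Fin (n % k) :=
  (finCongr (Nat.div_add_mod n k).symm).trans <|
    finSumFinEquiv.symm.trans <| finProdFinEquiv.symm.sumCongr (Equiv.refl _)

theorem cast_pow_pow_sub_pow_mul_pow {q : ℕ} (hq : q ≠ 0) (m k r : ℕ) :
    ((((q ^ m) ^ k - (q ^ m - 1) ^ k) * q ^ r : ℕ) : ℝ) =
      (1 - (1 - (q : ℝ)⁻¹ ^ m) ^ k) * (q : ℝ) ^ (k * m + r) := by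
  have hqm : (1 - (q : ℝ)⁻¹ ^ m) * q ^ m = q ^ m - 1 := by
    rw [sub_mul, inv_pow, inv_mul_cancel₀ (by positivity), one_mul]
  push_cast [Nat.cast_sub (Nat.pow_le_pow_left (Nat.sub_le _ _) k),
    Nat.cast_sub (Nat.one_le_pow _ _ (Nat.pos_of_ne_zero hq))]
  rw [pow_add, pow_mul', ← hqm, mul_pow]
  ring

theorem universal_set_construction_general {F : Type} [Field F] [Fintype F]
    (n k : ℕ) :
    ∃ U : Finset (Fin n → F),
      (U.card : ℝ) =
        (1 - (1 - ((Fintype.card F : ℝ))⁻¹ ^ (n / k)) ^ k) * (Fintype.card F : ℝ) ^ n ∧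
      ∀ S : Finset (Fin n → F), S.card = k → ∃ b : Fin n → F, ∀ a ∈ S, b + a ∈ U := by
  classical
  obtain ⟨U, hcard, hU⟩ :=
    exists_finset_card_eq_forall_exists_add_mem (blockAddEquiv F (finBlockEquiv n k))
  refine ⟨U, ?_, fun S hS ↦ ?_⟩
  · rw [hcard]
    simpa only [card_fun, Fintype.card_fin, Nat.div_add_mod] using
      cast_pow_pow_sub_pow_mul_pow (card_ne_zero (α := F)) (n / k) k (n % k)
  · let enum := S.equivFinOfCardEq hS
    obtain ⟨b, hb⟩ := hU fun i ↦ (enum.symm i : Fin n → F)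
    exact ⟨b, fun a ha ↦ by simpa using hb (enum ⟨a, ha⟩)⟩

theorem universal_set_construction {F : Type} [Field F] [Fintype F]
    (n k : ℕ) (hn : 1 ≤ n) (hk : 1 ≤ k) (hkq : k ≤ Fintype.card F ^ n) :
    ∃ U : Finset (Fin n → F),
      (U.card : ℝ) =
        (1 - (1 - ((Fintype.card F : ℝ))⁻¹ ^ (n / k)) ^ k) * (Fintype.card F : ℝ) ^ n ∧
      ∀ S : Finset (Fin n → F), S.card = k → ∃ b : Fin n → F, ∀ a ∈ S, b + a ∈ U :=
  universal_set_construction_general n k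
end

section
/- Write F_q^n = V₀ ⊕ V₁ ⊕ ... ⊕ V_k with dim Vᵢ = m for i = 1,...,k, and let πᵢ be the projection onto Vᵢ. Then U := {u ∈ F_q^n : πᵢ(u) = 0 for at least one index 1 ≤ i ≤ k} contains a translate of every k-element subset of F_q^n. -/
/-!
Match the `k` points `aᵢ` of `S` with distinct projections `πᵢ`, `i ≠ 0`. Since `πᵢ πⱼ = 0` for
`i ≠ j` and `πᵢ² = πᵢ`, the translate `b = -∑ πⱼ aⱼ` has `πᵢ (b + aᵢ) = -πᵢ aᵢ + πᵢ aᵢ = 0`.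
-/

lemma LinearMap.completeOrthogonalIdempotents_of_sum_apply {R M ι : Type*} [Semiring R]
    [AddCommMonoid M] [Module R M] [Fintype ι] {p : ι → Module.End R M}
    (hsum : ∀ v, ∑ i, p i v = v) (horth : ∀ i j, i ≠ j → ∀ v, p i (p j v) = 0) :
    CompleteOrthogonalIdempotents p :=
  CompleteOrthogonalIdempotents.iff_ortho_complete.mpr
    ⟨fun i j hij ↦ LinearMap.ext (horth i j hij),
      LinearMap.ext fun v ↦ by simpa only [LinearMap.sum_apply, Module.End.one_apply] using hsum v⟩

lemma OrthogonalIdempotents.exists_smul_add_eq_zero {A M ι : Type*} [Ring A] [AddCommGroup M]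
    [Module A M] [Fintype ι] {e : ι → A} (he : OrthogonalIdempotents e) (x : ι → M) :
    ∃ b : M, ∀ i, e i • (b + x i) = 0 := by
  refine ⟨-∑ j, e j • x j, fun i ↦ ?_⟩
  have hsum : e i • ∑ j, e j • x j = e i • x i := by
    rw [Finset.smul_sum, Finset.sum_eq_single i (fun j _ hji ↦ by rw [smul_smul, he.ortho hji.symm,
      zero_smul]) (absurd (Finset.mem_univ i)), smul_smul, (he.idem i).eq]
  rw [smul_add, smul_neg, hsum, neg_add_cancel]

theorem universal_set_from_projections_general {F : Type} [Field F] [Fintype F]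
    (n k : ℕ)
    (π : Fin (k + 1) → (Fin n → F) →ₗ[F] (Fin n → F))
    (hsum : ∀ v : Fin n → F, ∑ i, π i v = v)
    (horth : ∀ i j, i ≠ j → ∀ v : Fin n → F, π i (π j v) = 0)
    (U : Set (Fin n → F))
    (hU : U = {u | ∃ i : Fin (k + 1), i ≠ 0 ∧ π i u = 0}) :
    ∀ S : Finset (Fin n → F), S.card = k → ∃ b : Fin n → F, ∀ a ∈ S, b + a ∈ U := by
  intro S hS
  let σ : S ↪ Fin (k + 1) := (S.equivFinOfCardEq hS).toEmbedding.trans (Fin.succEmb k)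
  have hπ := (LinearMap.completeOrthogonalIdempotents_of_sum_apply hsum horth).embedding σ
  obtain ⟨b, hb⟩ := hπ.exists_smul_add_eq_zero ((↑) : S → Fin n → F)
  exact ⟨b, fun a ha ↦ hU ▸ ⟨σ ⟨a, ha⟩, Fin.succ_ne_zero _, hb ⟨a, ha⟩⟩⟩

theorem universal_set_from_projections {F : Type} [Field F] [Fintype F]
    (n k m : ℕ) (hk : 1 ≤ k) (hm : 1 ≤ m) (hkm : k * m ≤ n)
    (π : Fin (k + 1) → (Fin n → F) →ₗ[F] (Fin n → F))
    (hsum : ∀ v : Fin n → F, ∑ i, π i v = v)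
    (horth : ∀ i j, i ≠ j → ∀ v : Fin n → F, π i (π j v) = 0)
    (hdim : ∀ i, i ≠ 0 → Module.finrank F (LinearMap.range (π i)) = m)
    (U : Set (Fin n → F))
    (hU : U = {u | ∃ i : Fin (k + 1), i ≠ 0 ∧ π i u = 0}) :
    ∀ S : Finset (Fin n → F), S.card = k → ∃ b : Fin n → F, ∀ a ∈ S, b + a ∈ U :=
  universal_set_from_projections_general n k π hsum horth U hU
end

section
/- For n ≥ r ≥ 1 integers and q a prime power, there exists a Kakeya set K of rank r in F_q^n with |K| ≤ (1 - (1 - q^(-⌊n/q^r⌋))^(q^r)) · q^n. -/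
/-- The paper's `k`-universal sets, with `A.card ≤ k` rather than `= k` so that universality
passes to preimages under surjections, which may shrink `A`. -/
def IsUniversal {V : Type*} [Add V] (k : ℕ) (K : Set V) : Prop :=
  ∀ A : Finset V, A.card ≤ k → ∃ v : V, ∀ a ∈ A, v + a ∈ K

theorem IsUniversal.preimage {V W : Type*} [AddMonoid V] [AddMonoid W] {k : ℕ} {K : Set W}
    (hK : IsUniversal k K) (φ : V →+ W) (hφ : Function.Surjective φ) :
    IsUniversal k (φ ⁻¹' K) := by
  classical
  intro A hA
  obtain ⟨w, hw⟩ := hK (A.image φ) (Finset.card_image_le.trans hA)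
  obtain ⟨v, rfl⟩ := hφ w
  exact ⟨v, fun a ha => by simpa using hw (φ a) (Finset.mem_image_of_mem φ ha)⟩

/-- Diagonal trick: inject `A` into `κ` by `ι` and let the translate cancel the coordinate `ι a`
of each `a ∈ A`. -/
theorem isUniversal_setOf_exists_apply_eq_zero (κ M : Type*) [Fintype κ] [AddGroup M] :
    IsUniversal (Fintype.card κ) {f : κ → M | ∃ i, f i = 0} := by
  intro A hA
  obtain ⟨ι⟩ := Function.Embedding.nonempty_of_card_le (α := A) (β := κ) (by simpa using hA)
  refine ⟨Function.extend ι (fun a => -(a.1 (ι a))) 0, fun a ha => ⟨ι ⟨a, ha⟩, ?_⟩⟩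
  rw [Pi.add_apply, ι.injective.extend_apply, neg_add_cancel]

theorem IsUniversal.isKakeya {F V : Type} [Field F] [Fintype F] [AddCommGroup V] [Module F V]
    [Finite V] {r : ℕ} {K : Set V} (hK : IsUniversal (Fintype.card F ^ r) K) :
    IsKakeya F r K := by
  intro L hL
  have : Fintype L := Fintype.ofFinite L
  have hfin := (L : Set V).toFinite
  obtain ⟨v, hv⟩ := hK hfin.toFinset <| by
    rw [← hL, ← Module.card_eq_pow_finrank, hfin.card_toFinset]; rfl
  exact ⟨v, fun x hx => hv x (hfin.mem_toFinset.mpr hx)⟩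

open Finset in
theorem card_filter_exists_apply_eq_zero_add (κ M : Type*) [Fintype κ] [DecidableEq κ]
    [AddGroup M] [Fintype M] [DecidablePred fun f : κ → M => ∃ i, f i = 0] :
    #{f : κ → M | ∃ i, f i = 0} + (Fintype.card M - 1) ^ Fintype.card κ =
      Fintype.card M ^ Fintype.card κ := by
  classical
  have hnowhere : ({f : κ → M | ¬∃ i, f i = 0} : Finset (κ → M)) =
      Fintype.piFinset fun _ => {0}ᶜ := by
    ext f; simp
  have hsplit := card_filter_add_card_filter_not (s := univ) fun f : κ → M => ∃ i, f i = 0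
  rw [hnowhere, Fintype.card_piFinset, card_univ, Fintype.card_fun] at hsplit
  simpa [card_compl] using hsplit

def finBlocksAddEquiv (M : Type*) [AddCommMonoid M] {k m n : ℕ} (h : k * m ≤ n) :
    (Fin n → M) ≃+ (Fin k → Fin m → M) × (Fin (n - k * m) → M) :=
  let blocks : (Fin k × Fin m) ⊕ Fin (n - k * m) ≃ Fin n :=
    (Equiv.sumCongr finProdFinEquiv (Equiv.refl _)).trans
      (finSumFinEquiv.trans (finCongr (Nat.add_sub_cancel' h)))
  (LinearEquiv.funCongrLeft ℕ M blocks ≪≫ₗ LinearEquiv.sumArrowLequivProdArrow _ _ ℕ M ≪≫ₗ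
    (LinearEquiv.curry ℕ M _ _).prodCongr (LinearEquiv.refl ℕ _)).toAddEquiv

open Finset in
theorem exists_isUniversal_card_add (M : Type*) [AddCommGroup M] [Fintype M] {k m n : ℕ}
    (h : k * m ≤ n) :
    ∃ K : Finset (Fin n → M), IsUniversal k (K : Set (Fin n → M)) ∧
      #K + (Fintype.card M ^ m - 1) ^ k * Fintype.card M ^ (n - k * m) =
        Fintype.card M ^ n := by
  classical
  let ψ := finBlocksAddEquiv M h
  let Z : Finset (Fin k → Fin m → M) := {f | ∃ i, f i = 0}
  refine ⟨(Z ×ˢ univ).map ψ.toEquiv.symm.toEmbedding, ?_, ?_⟩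
  · have hZ : IsUniversal k (Z : Set (Fin k → Fin m → M)) := by
      simpa [Z] using isUniversal_setOf_exists_apply_eq_zero (Fin k) (Fin m → M)
    have := (hZ.preimage (AddMonoidHom.fst _ _) Prod.fst_surjective).preimage
      ψ.toAddMonoidHom ψ.surjective
    rw [coe_map, coe_product, coe_univ, Set.prod_univ]
    rwa [Equiv.coe_toEmbedding, ψ.toEquiv.image_symm_eq_preimage]
  · have hZcard : #Z + (Fintype.card M ^ m - 1) ^ k = (Fintype.card M ^ m) ^ k := by
      simpa using card_filter_exists_apply_eq_zero_add (Fin k) (Fin m → M)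
    rw [card_map, card_product, card_univ, Fintype.card_fun, Fintype.card_fin, ← add_mul,
      hZcard, ← pow_mul, ← pow_add, mul_comm m k, Nat.add_sub_cancel' h]

theorem one_sub_one_sub_inv_pow_pow_mul_pow {K : Type*} [Field K] {x : K} (hx : x ≠ 0)
    {k m n : ℕ} (h : k * m ≤ n) :
    (1 - (1 - x⁻¹ ^ m) ^ k) * x ^ n = x ^ n - (x ^ m - 1) ^ k * x ^ (n - k * m) := by
  obtain ⟨d, rfl⟩ := Nat.exists_eq_add_of_le h
  have hxm : (1 - x⁻¹ ^ m) * x ^ m = x ^ m - 1 := by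
    rw [sub_mul, inv_pow, inv_mul_cancel₀ (pow_ne_zero m hx), one_mul]
  rw [Nat.add_sub_cancel_left, ← hxm, mul_pow, ← pow_mul, mul_comm m k, pow_add]
  ring

theorem kakeya_upper_universal_general {F : Type} [Field F] [Fintype F] (n r : ℕ) :
    ∃ K : Finset (Fin n → F), IsKakeya F r (K : Set (Fin n → F)) ∧
      (K.card : ℝ) ≤
        (1 - (1 - ((Fintype.card F : ℝ))⁻¹ ^ (n / Fintype.card F ^ r)) ^
            (Fintype.card F ^ r)) * (Fintype.card F : ℝ) ^ n := by
  have hblocks := Nat.mul_div_le n (Fintype.card F ^ r)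
  obtain ⟨K, hK, hcard⟩ := exists_isUniversal_card_add F hblocks
  refine ⟨K, hK.isKakeya, le_of_eq ?_⟩
  have hq : (Fintype.card F : ℝ) ≠ 0 := by exact_mod_cast Fintype.card_ne_zero
  have hqm : 1 ≤ Fintype.card F ^ (n / Fintype.card F ^ r) := Nat.one_le_pow _ _ Fintype.card_pos
  rw [one_sub_one_sub_inv_pow_pow_mul_pow hq hblocks, eq_sub_iff_add_eq]
  exact_mod_cast hcard

theorem kakeya_upper_universal {F : Type} [Field F] [Fintype F] (n r : ℕ)
    (hr : 1 ≤ r) (hrn : r ≤ n) :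
    ∃ K : Finset (Fin n → F), IsKakeya F r (K : Set (Fin n → F)) ∧
      (K.card : ℝ) ≤
        (1 - (1 - ((Fintype.card F : ℝ))⁻¹ ^ (n / Fintype.card F ^ r)) ^
            (Fintype.card F ^ r)) * (Fintype.card F : ℝ) ^ n :=
  kakeya_upper_universal_general n r
end

section
/- For n ≥ r ≥ 1 integers and q a prime power, there exists a Kakeya set K of rank r in F_q^n with |K| < q^(n(1 - q^(-r)) + r + 1). -/
open Finset

section Blocks

variable {ι P β M : Type*} [Fintype ι] [DecidableEq ι] [Fintype β]

theorem card_filter_forall_eq_zero_le [Fintype M] [Zero M] [DecidableEq M] (g : β ↪ ι) :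
    #{x : ι → M | ∀ j, x (g j) = 0} ≤ Fintype.card M ^ (Fintype.card ι - Fintype.card β) := by
  let restrict (x : ι → M) (k : {k // k ∉ Set.range g}) : M := x k
  calc #{x : ι → M | ∀ j, x (g j) = 0}
      ≤ #(univ : Finset ({k // k ∉ Set.range g} → M)) := by
        refine card_le_card_of_injOn restrict (fun _ _ => mem_univ _) ?_
        intro x hx y hy hxy
        simp only [coe_filter, mem_univ, true_and, Set.mem_ofPred_eq] at hx hy
        funext k
        by_cases hk : k ∈ Set.range g
        · obtain ⟨j, rfl⟩ := hk
          rw [hx j, hy j]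
        · exact congrFun hxy ⟨k, hk⟩
    _ = Fintype.card M ^ (Fintype.card ι - Fintype.card β) := by
        rw [card_univ, Fintype.card_fun, Fintype.card_subtype_compl,
          Set.card_range_of_injective g.injective]

def vanishingOnSomeBlock [Fintype P] [Fintype M] [Zero M] [DecidableEq M]
    (e : P × β ↪ ι) : Finset (ι → M) :=
  univ.biUnion fun p => {x | ∀ j, x (e (p, j)) = 0}

theorem mem_vanishingOnSomeBlock [Fintype P] [Fintype M] [Zero M] [DecidableEq M]
    {e : P × β ↪ ι} {x : ι → M} :
    x ∈ vanishingOnSomeBlock e ↔ ∃ p, ∀ j, x (e (p, j)) = 0 := by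
  simp [vanishingOnSomeBlock]

theorem card_vanishingOnSomeBlock_le [Fintype P] [Fintype M] [Zero M] [DecidableEq M]
    (e : P × β ↪ ι) :
    #(vanishingOnSomeBlock (M := M) e) ≤
      Fintype.card P * Fintype.card M ^ (Fintype.card ι - Fintype.card β) :=
  card_biUnion_le_card_mul _ _ _ fun p _ =>
    card_filter_forall_eq_zero_le
      ⟨fun j => e (p, j), fun _ _ h => (Prod.ext_iff.1 (e.injective h)).2⟩

omit [Fintype ι] [DecidableEq ι] [Fintype β] in
theorem exists_add_eq_zero_on_blocks [AddGroup M] (e : P × β ↪ ι) (φ : P → ι → M) :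
    ∃ v : ι → M, ∀ p j, (v + φ p) (e (p, j)) = 0 := by
  refine ⟨Function.extend e (fun pj => -φ pj.1 (e pj)) 0, fun p j => ?_⟩
  rw [Pi.add_apply, e.injective.extend_apply, neg_add_cancel]

theorem isKakeya_vanishingOnSomeBlock {F : Type} [Field F] [Fintype F] [DecidableEq F]
    {ι β : Type} [Fintype ι] [DecidableEq ι] [Fintype β] {r : ℕ} (e : (Fin r → F) × β ↪ ι) :
    IsKakeya F r ((vanishingOnSomeBlock e : Finset (ι → F)) : Set (ι → F)) := by
  intro L hL
  let b := (Module.finBasisOfFinrankEq F L hL).equivFun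
  obtain ⟨v, hv⟩ := exists_add_eq_zero_on_blocks e fun ε => (b.symm ε : ι → F)
  refine ⟨v, fun x hx => ?_⟩
  exact mem_vanishingOnSomeBlock.2 ⟨b ⟨x, hx⟩, by simpa using hv (b ⟨x, hx⟩)⟩

end Blocks

theorem natCast_sub_div_lt (n k : ℕ) :
    ((n - n / k : ℕ) : ℝ) < n * (1 - (k : ℝ)⁻¹) + 1 := by
  have hfloor : (n : ℝ) / k < (n / k : ℕ) + 1 := by
    simpa [Nat.floor_div_eq_div] using Nat.lt_floor_add_one ((n : ℝ) / k)
  rw [Nat.cast_sub (Nat.div_le_self n k)]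
  rw [div_eq_mul_inv] at hfloor
  linarith

theorem kakeya_upper_universal_relaxed_general {F : Type} [Field F] [Fintype F] (n r : ℕ) :
    ∃ K : Finset (Fin n → F), IsKakeya F r (K : Set (Fin n → F)) ∧
      (K.card : ℝ) <
        (Fintype.card F : ℝ) ^
          ((n : ℝ) * (1 - ((Fintype.card F : ℝ))⁻¹ ^ r) + (r : ℝ) + 1) := by
  classical
  set q := Fintype.card F
  have hq : 1 < q := Fintype.one_lt_card
  set m := n / q ^ r
  obtain ⟨e⟩ : Nonempty ((Fin r → F) × Fin m ↪ Fin n) := by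
    refine Function.Embedding.nonempty_of_card_le ?_
    simpa [m] using Nat.mul_div_le n (q ^ r)
  refine ⟨vanishingOnSomeBlock e, isKakeya_vanishingOnSomeBlock e, ?_⟩
  have hcard := card_vanishingOnSomeBlock_le (M := F) e
  simp only [Fintype.card_fun, Fintype.card_fin] at hcard
  calc (#(vanishingOnSomeBlock e) : ℝ) ≤ (q : ℝ) ^ ((r + (n - m) : ℕ) : ℝ) := by
        rw [Real.rpow_natCast, pow_add]; exact_mod_cast hcard
    _ < (q : ℝ) ^ ((n : ℝ) * (1 - (q : ℝ)⁻¹ ^ r) + r + 1) := by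
        refine Real.rpow_lt_rpow_of_exponent_lt (by exact_mod_cast hq) ?_
        have hexp := natCast_sub_div_lt n (q ^ r)
        push_cast at hexp ⊢
        rw [inv_pow]
        linarith

theorem kakeya_upper_universal_relaxed {F : Type} [Field F] [Fintype F] (n r : ℕ)
    (hr : 1 ≤ r) (hrn : r ≤ n) :
    ∃ K : Finset (Fin n → F), IsKakeya F r (K : Set (Fin n → F)) ∧
      (K.card : ℝ) <
        (Fintype.card F : ℝ) ^
          ((n : ℝ) * (1 - ((Fintype.card F : ℝ))⁻¹ ^ r) + (r : ℝ) + 1) :=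
  kakeya_upper_universal_relaxed_general n r
end

section
/- Let P be a non-zero polynomial in n variables over a field F that vanishes with multiplicity at least m at every point of Sⁿ, where S ⊆ F is finite. Then deg P ≥ m·|S|. -/
/-!
Induct on `n`. Write `P = ∑_{i ≤ t} P_i(X') X₀^i` with leading coefficient `P_t ≠ 0`. Fix
`a' ∈ S^{n-1}` and a monomial `X'^β` of `P_t(X' + a')`. Taking the `X'^β`-coefficient of
`P(X₀, X' + a')` gives a nonzero univariate polynomial of degree `≤ t`; since `P` vanishes to
order `m` at every `(s, a')` with `s ∈ S`, it has a root of multiplicity `≥ m - |β|` at each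
`s ∈ S`, so `(m - |β|) |S| ≤ t`. Thus `P_t` vanishes to order `m - ⌊t / |S|⌋` on `S^{n-1}`, and
induction gives `deg P ≥ deg P_t + t ≥ (m - ⌊t / |S|⌋) |S| + t ≥ m |S|`.
-/

/-- `P` vanishes at `a` with multiplicity at least `m`: every monomial of the
shifted polynomial `P(X + a)` has total degree at least `m`. -/
def VanishesWithMult {F : Type} [CommRing F] {n : ℕ}
    (P : MvPolynomial (Fin n) F) (a : Fin n → F) (m : ℕ) : Prop :=
  ∀ d ∈ (MvPolynomial.aeval
      (fun j => MvPolynomial.X j + MvPolynomial.C (a j)) P).support,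
    m ≤ d.sum fun _ e => e

open Finset

theorem Finsupp.degree_cons {M : Type*} [AddCommMonoid M] {n : ℕ} (i : M) (β : Fin n →₀ M) :
    (β.cons i).degree = i + β.degree := by
  simp [Finsupp.degree_eq_sum, Fin.sum_univ_succ]

namespace Polynomial

variable {R : Type*} [CommRing R]

theorem pow_X_sub_C_dvd_iff_taylor_coeff (a : R) (p : R[X]) (k : ℕ) :
    (X - C a) ^ k ∣ p ↔ ∀ j < k, (taylor a p).coeff j = 0 := by
  have h (q : R[X]) : taylorEquiv a q = taylor a q := rfl
  rw [← X_pow_dvd_iff, ← map_dvd_iff (taylorEquiv a), map_pow, map_sub, h, h, h, taylor_X, taylor_C,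
    add_sub_cancel_right]

theorem mul_card_le_natDegree_of_pow_dvd [IsDomain R] {p : R[X]} (hp : p ≠ 0) {S : Finset R}
    {k : ℕ} (h : ∀ a ∈ S, (X - C a) ^ k ∣ p) : k * #S ≤ p.natDegree := by
  classical
  have hroots : k • S.val ≤ p.roots := Multiset.le_iff_count.2 fun a => by
    rw [Multiset.count_nsmul, count_roots]
    by_cases ha : a ∈ S
    · rw [Multiset.count_eq_one_of_mem S.nodup ha, mul_one]
      exact (le_rootMultiplicity_iff hp).2 (h a ha)
    · simp [Multiset.count_eq_zero.2 ha]
  calc k * #S = Multiset.card (k • S.val) := by simp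
    _ ≤ Multiset.card p.roots := Multiset.card_le_card hroots
    _ ≤ p.natDegree := card_roots' p

variable {σ : Type*}

noncomputable def mvCoeff (β : σ →₀ ℕ) (g : (MvPolynomial σ R)[X]) : R[X] :=
  g.sum fun i c => monomial i (c.coeff β)

@[simp]
theorem coeff_mvCoeff (β : σ →₀ ℕ) (g : (MvPolynomial σ R)[X]) (i : ℕ) :
    (mvCoeff β g).coeff i = (g.coeff i).coeff β := by
  simp +contextual [mvCoeff, Polynomial.sum_def, coeff_monomial]

theorem mvCoeff_taylor (β : σ →₀ ℕ) (s : R) (g : (MvPolynomial σ R)[X]) :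
    mvCoeff β (taylor (MvPolynomial.C s) g) = taylor s (mvCoeff β g) := by
  have mvCoeff_hasseDeriv (k : ℕ) : mvCoeff β (hasseDeriv k g) = hasseDeriv k (mvCoeff β g) := by
    ext i
    rw [coeff_mvCoeff, hasseDeriv_coeff, hasseDeriv_coeff, coeff_mvCoeff,
      ← map_natCast (MvPolynomial.C : R →+* MvPolynomial σ R), MvPolynomial.coeff_C_mul]
  have coeff_eval (r : (MvPolynomial σ R)[X]) :
      (r.eval (MvPolynomial.C s)).coeff β = (mvCoeff β r).eval s := by
    rw [eval_eq_sum, Polynomial.sum_def, MvPolynomial.coeff_sum, mvCoeff, Polynomial.sum_def,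
      eval_finsetSum]
    refine Finset.sum_congr rfl fun i _ => ?_
    rw [eval_monomial, ← map_pow, mul_comm, MvPolynomial.coeff_C_mul, mul_comm]
  ext j
  rw [coeff_mvCoeff, taylor_coeff, taylor_coeff, coeff_eval, mvCoeff_hasseDeriv]

end Polynomial

namespace MvPolynomial

variable {R : Type*} [CommRing R] {σ : Type*}

noncomputable def shift (a : σ → R) : MvPolynomial σ R →ₐ[R] MvPolynomial σ R :=
  aeval fun j => X j + C (a j)

theorem finSuccEquiv_shift_cons {n : ℕ} (s : R) (a : Fin n → R)
    (P : MvPolynomial (Fin (n + 1)) R) :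
    finSuccEquiv R n (shift (Fin.cons s a) P) =
      Polynomial.taylor (C s) ((finSuccEquiv R n P).map (shift a)) := by
  suffices (finSuccEquiv R n).toAlgHom.comp (shift (Fin.cons s a)) =
      ((Polynomial.taylorAlgHom (C s : MvPolynomial (Fin n) R)).restrictScalars R).comp
        ((Polynomial.mapAlgHom (shift a)).comp (finSuccEquiv R n).toAlgHom) from
    DFunLike.congr_fun this P
  refine algHom_ext fun i => Fin.cases ?_ (fun j => ?_) i <;>
    simp [shift, finSuccEquiv_apply]

end MvPolynomial

open Polynomial MvPolynomial

section

variable {R : Type} [CommRing R] {n : ℕ}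

theorem vanishesWithMult_iff {P : MvPolynomial (Fin n) R} {a : Fin n → R} {m : ℕ} :
    VanishesWithMult P a m ↔ ∀ d ∈ (shift a P).support, m ≤ d.degree :=
  Iff.rfl

theorem VanishesWithMult.pow_X_sub_C_dvd_mvCoeff {P : MvPolynomial (Fin (n + 1)) R} {s : R}
    {a : Fin n → R} {m : ℕ} (h : VanishesWithMult P (Fin.cons s a) m) (β : Fin n →₀ ℕ) :
    (Polynomial.X - Polynomial.C s) ^ (m - β.degree) ∣
      ((finSuccEquiv R n P).map (shift a)).mvCoeff β := by
  rw [pow_X_sub_C_dvd_iff_taylor_coeff, ← mvCoeff_taylor, ← finSuccEquiv_shift_cons]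
  intro j hj
  rw [coeff_mvCoeff, finSuccEquiv_coeff_coeff]
  by_contra hne
  have hdeg := vanishesWithMult_iff.1 h _ (mem_support_iff.2 hne)
  rw [Finsupp.degree_cons] at hdeg
  omega

variable [IsDomain R]

theorem vanishesWithMult_leadingCoeff_finSuccEquiv {P : MvPolynomial (Fin (n + 1)) R}
    {S : Finset R} (hS : S.Nonempty) {m : ℕ}
    (hvan : ∀ a : Fin (n + 1) → R, (∀ j, a j ∈ S) → VanishesWithMult P a m)
    {a : Fin n → R} (ha : ∀ j, a j ∈ S) :
    VanishesWithMult (finSuccEquiv R n P).leadingCoeff a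
      (m - (finSuccEquiv R n P).natDegree / #S) := by
  set f := finSuccEquiv R n P
  rw [vanishesWithMult_iff]
  intro β hβ
  set q : R[X] := (f.map (shift a)).mvCoeff β
  have hq : q.coeff f.natDegree ≠ 0 := by simpa [q, Polynomial.coeff_map] using hβ
  have hq0 : q ≠ 0 := fun h => hq (by rw [h, Polynomial.coeff_zero])
  have hdeg : q.natDegree ≤ f.natDegree := natDegree_le_iff_coeff_eq_zero.2 fun i hi => by
    simp [q, Polynomial.coeff_map, coeff_eq_zero_of_natDegree_lt hi]
  have hmul : (m - β.degree) * #S ≤ f.natDegree :=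
    (mul_card_le_natDegree_of_pow_dvd hq0 fun s hs =>
      (hvan _ (Fin.forall_fin_succ.2 ⟨hs, ha⟩)).pow_X_sub_C_dvd_mvCoeff β).trans hdeg
  have := (Nat.le_div_iff_mul_le hS.card_pos).2 hmul
  omega

theorem mul_card_le_totalDegree_of_vanishesWithMult {m : ℕ} {P : MvPolynomial (Fin n) R}
    (hP : P ≠ 0) {S : Finset R}
    (hvan : ∀ a : Fin n → R, (∀ j, a j ∈ S) → VanishesWithMult P a m) :
    m * #S ≤ P.totalDegree := by
  obtain rfl | hS := S.eq_empty_or_nonempty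
  · simp
  induction n generalizing m with
  | zero =>
    have hshift : shift (Fin.elim0 : Fin 0 → R) P = P := by
      rw [show shift (Fin.elim0 : Fin 0 → R) = AlgHom.id R _ from algHom_ext fun i => i.elim0]
      rfl
    obtain ⟨d, hd⟩ := support_nonempty.2 hP
    have hm := vanishesWithMult_iff.1 (hvan Fin.elim0 fun j => j.elim0) d (by rwa [hshift])
    rw [Subsingleton.elim d 0, map_zero, Nat.le_zero] at hm
    simp [hm]
  | succ n ih =>
    set f := finSuccEquiv R n P
    have hlc : f.leadingCoeff ≠ 0 := leadingCoeff_ne_zero.2 ((EmbeddingLike.map_ne_zero_iff).2 hP)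
    have hlc_deg := ih hlc fun a ha => vanishesWithMult_leadingCoeff_finSuccEquiv hS hvan ha
    calc m * #S ≤ (m - f.natDegree / #S) * #S + f.natDegree / #S * #S := by
          rw [← add_mul]; gcongr; omega
      _ ≤ f.leadingCoeff.totalDegree + f.natDegree := add_le_add hlc_deg (Nat.div_mul_le_self _ _)
      _ ≤ P.totalDegree := totalDegree_coeff_finSuccEquiv_add_le P f.natDegree hlc

end

theorem schwartz_zippel_corollary_general {F : Type} [Field F] (n m : ℕ)
    (P : MvPolynomial (Fin n) F) (hP : P ≠ 0) (S : Finset F)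
    (hvan : ∀ a : Fin n → F, (∀ j, a j ∈ S) → VanishesWithMult P a m) :
    m * S.card ≤ P.totalDegree :=
  mul_card_le_totalDegree_of_vanishesWithMult hP hvan

theorem schwartz_zippel_corollary {F : Type} [Field F] (n m : ℕ) (hn : 1 ≤ n)
    (P : MvPolynomial (Fin n) F) (hP : P ≠ 0) (S : Finset F) (hS : S.Nonempty)
    (hvan : ∀ a : Fin n → F, (∀ j, a j ∈ S) → VanishesWithMult P a m) :
    m * S.card ≤ P.totalDegree :=
  schwartz_zippel_corollary_general n m P hP S hvan
end

section
/- Let P be a non-zero polynomial in n variables over a field F, let b, d₁,...,d_r ∈ Fⁿ, and let t₁,...,t_r ∈ F. Then the multiplicity of the r-variable polynomial Q(T₁,...,T_r) := P(b + T₁d₁ + ... + T_r d_r) at the point (t₁,...,t_r) is at least the multiplicity of P at b + t₁d₁ + ... + t_r d_r. -/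
namespace MvPolynomial

variable {R σ τ ι : Type*} [CommSemiring R]

theorem le_degree_of_mem_support_aeval_of_isHomogeneous {L : σ → MvPolynomial τ R} {k m : ℕ}
    (hL : ∀ i, (L i).IsHomogeneous k) {p : MvPolynomial σ R}
    (hp : ∀ e ∈ p.support, m ≤ e.degree) {u : τ →₀ ℕ} (hu : u ∈ (aeval L p).support) :
    k * m ≤ u.degree := by
  rw [mem_support_iff, p.as_sum, map_sum, coeff_sum] at hu
  obtain ⟨e, he, hcoeff⟩ := Finset.exists_ne_zero_of_sum_ne_zero hu
  have hhom : (aeval L (monomial e (coeff e p))).IsHomogeneous (k * e.degree) :=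
    (isHomogeneous_monomial _ rfl).aeval _ hL
  have hdeg : u.degree = k * e.degree := by_contra fun hne => hcoeff (hhom.coeff_eq_zero hne)
  rw [hdeg]
  exact Nat.mul_le_mul_left k (hp e he)

theorem isHomogeneous_sum_C_mul_X [Fintype ι] (c : ι → R) :
    (∑ s, C (c s) * X s : MvPolynomial ι R).IsHomogeneous 1 :=
  IsHomogeneous.sum _ _ _ fun _ _ => isHomogeneous_C_mul_X _ _

theorem aeval_X_add_C_aeval_affine [Fintype ι] (b : σ → R) (d : ι → σ → R) (t : ι → R)
    (p : MvPolynomial σ R) :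
    aeval (fun s => X s + C (t s)) (aeval (fun j => C (b j) + ∑ s, C (d s j) * X s) p) =
      aeval (fun j => ∑ s, C (d s j) * X s)
        (aeval (fun j => X j + C (b j + ∑ s, t s * d s j)) p) := by
  rw [← AlgHom.comp_apply, ← AlgHom.comp_apply, comp_aeval, comp_aeval]
  congr 2
  funext j
  simp only [map_add, map_sum, map_mul, aeval_X, aeval_C, algebraMap_eq, mul_add,
    Finset.sum_add_distrib, mul_comm (C (t _))]
  ring

end MvPolynomial

open MvPolynomial

theorem multiplicity_of_composition_general {F : Type} [Field F] (n r : ℕ)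
    (P : MvPolynomial (Fin n) F)
    (b : Fin n → F) (d : Fin r → Fin n → F) (t : Fin r → F)
    (Q : MvPolynomial (Fin r) F)
    (hQ : Q = MvPolynomial.aeval
      (fun j => MvPolynomial.C (b j) +
        ∑ s : Fin r, MvPolynomial.C (d s j) * MvPolynomial.X s) P) :
    ∀ m : ℕ, VanishesWithMult P (fun j => b j + ∑ s : Fin r, t s * d s j) m →
      VanishesWithMult Q t m := by
  intro m hm u hu
  rw [hQ, aeval_X_add_C_aeval_affine] at hu
  exact (one_mul m).ge.trans <| le_degree_of_mem_support_aeval_of_isHomogeneous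
    (fun j => isHomogeneous_sum_C_mul_X (d · j)) hm hu

theorem multiplicity_of_composition {F : Type} [Field F] (n r : ℕ)
    (hn : 1 ≤ n) (hr : 1 ≤ r)
    (P : MvPolynomial (Fin n) F) (hP : P ≠ 0)
    (b : Fin n → F) (d : Fin r → Fin n → F) (t : Fin r → F)
    (Q : MvPolynomial (Fin r) F)
    (hQ : Q = MvPolynomial.aeval
      (fun j => MvPolynomial.C (b j) +
        ∑ s : Fin r, MvPolynomial.C (d s j) * MvPolynomial.X s) P) :
    ∀ m : ℕ, VanishesWithMult P (fun j => b j + ∑ s : Fin r, t s * d s j) m →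
      VanishesWithMult Q t m :=
  multiplicity_of_composition_general n r P b d t Q hQ
end

section
/- Let n, m ≥ 1 and k ≥ 0 be integers, F a field, and S ⊆ Fⁿ a finite set satisfying C(m+n-1, n)·|S| < C(n+k, n). Then there exists a non-zero polynomial over F in n variables of degree at most k vanishing at every point of S with multiplicity at least m. -/
namespace Finsupp

variable {σ : Type*} [Fintype σ]

lemma degree_eq_apply_none_add_degree_some (e : Option σ →₀ ℕ) :
    e.degree = e none + e.some.degree := by
  simp [degree_eq_sum, Fintype.sum_option]

lemma mem_finsuppAntidiag_univ [DecidableEq σ] {e : σ →₀ ℕ} {t : ℕ} :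
    e ∈ Finset.finsuppAntidiag Finset.univ t ↔ e.degree = t := by
  simp [degree_eq_sum]

noncomputable def degreeLeEquivFinsuppAntidiag [DecidableEq σ] (t : ℕ) :
    {d : σ →₀ ℕ | d.degree ≤ t} ≃ Finset.finsuppAntidiag (Finset.univ : Finset (Option σ)) t where
  toFun d := ⟨d.1.optionElim (t - d.1.degree), by
    have : d.1.degree ≤ t := d.2
    rw [mem_finsuppAntidiag_univ, degree_eq_apply_none_add_degree_some]
    simp
    omega⟩
  invFun e := ⟨e.1.some, by
    have := mem_finsuppAntidiag_univ.1 e.2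
    rw [degree_eq_apply_none_add_degree_some] at this
    simp only [Set.mem_ofPred_eq]
    omega⟩
  left_inv d := by simp
  right_inv e := by
    have := mem_finsuppAntidiag_univ.1 e.2
    rw [degree_eq_apply_none_add_degree_some] at this
    ext1
    dsimp only
    convert optionElim_some e.1 using 2
    omega

theorem natCard_degree_le (t : ℕ) :
    Nat.card {d : σ →₀ ℕ | d.degree ≤ t} = (Fintype.card σ + t).choose (Fintype.card σ) := by
  classical
  rw [Nat.card_congr (degreeLeEquivFinsuppAntidiag t), Nat.card_eq_finsetCard,
    Finset.card_finsuppAntidiag_nat_eq_choose, Finset.card_univ, Fintype.card_option,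
    Nat.add_right_comm, Nat.add_sub_cancel, Nat.choose_symm_add]

end Finsupp

namespace MvPolynomial

open Module

variable {σ : Type*} [Fintype σ]

theorem finrank_restrictTotalDegree (R : Type*) [CommRing R] [StrongRankCondition R] (k : ℕ) :
    finrank R (restrictTotalDegree σ R k) = (Fintype.card σ + k).choose (Fintype.card σ) :=
  (finrank_eq_nat_card_basis (basisRestrictSupport R _)).trans (Finsupp.natCard_degree_le k)

variable {F : Type*} [Field F]

noncomputable def lowOrderCoeffs (S : Finset (σ → F)) (m : ℕ) :
    MvPolynomial σ F →ₗ[F] S × {d : σ →₀ ℕ | d.degree < m} → F :=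
  LinearMap.pi fun p => lcoeff F p.2.1 ∘ₗ (aeval fun j => X j + C (p.1.1 j)).toLinearMap

theorem exists_ne_zero_totalDegree_le_lowOrderCoeffs_eq_zero (S : Finset (σ → F)) (m k : ℕ)
    (h : S.card * Nat.card {d : σ →₀ ℕ | d.degree < m} <
      (Fintype.card σ + k).choose (Fintype.card σ)) :
    ∃ P : MvPolynomial σ F, P ≠ 0 ∧ P.totalDegree ≤ k ∧ lowOrderCoeffs S m P = 0 := by
  have : Finite {d : σ →₀ ℕ | d.degree < m} := (Finsupp.finite_of_degree_lt m).to_subtype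
  have : Fintype {d : σ →₀ ℕ | d.degree < m} := Fintype.ofFinite _
  have hker :
      LinearMap.ker ((lowOrderCoeffs S m).domRestrict (restrictTotalDegree σ F k)) ≠ ⊥ := by
    refine LinearMap.ker_ne_bot_of_finrank_lt ?_
    rwa [finrank_restrictTotalDegree, Module.finrank_fintype_fun_eq_card, Fintype.card_prod,
      Fintype.card_coe, Fintype.card_eq_nat_card]
  obtain ⟨⟨P, hPk⟩, hPker, hP0⟩ := (Submodule.ne_bot_iff _).1 hker
  exact ⟨P, by simpa using hP0, (mem_restrictTotalDegree _ _ _).1 hPk, hPker⟩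

end MvPolynomial

open MvPolynomial

theorem vanishesWithMult_of_lowOrderCoeffs_eq_zero {F : Type} [Field F] {n m : ℕ}
    {S : Finset (Fin n → F)} {P : MvPolynomial (Fin n) F} (hP : lowOrderCoeffs S m P = 0)
    {a : Fin n → F} (ha : a ∈ S) : VanishesWithMult P a m := by
  intro d hd
  by_contra! hlt
  exact mem_support_iff.1 hd (congrFun hP (⟨a, ha⟩, ⟨d, hlt⟩))

theorem exists_poly_vanishing_with_multiplicity_general {F : Type} [Field F]
    (n m k : ℕ) (hm : 1 ≤ m)
    (S : Finset (Fin n → F))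
    (h : Nat.choose (m + n - 1) n * S.card < Nat.choose (n + k) n) :
    ∃ P : MvPolynomial (Fin n) F, P ≠ 0 ∧ P.totalDegree ≤ k ∧
      ∀ a ∈ S, VanishesWithMult P a m := by
  obtain ⟨t, rfl⟩ := Nat.exists_eq_add_of_le' hm
  have hcard : Nat.card {d : Fin n →₀ ℕ | d.degree < t + 1} = (t + 1 + n - 1).choose n := by
    simp_rw [Nat.lt_succ_iff]
    rw [Finsupp.natCard_degree_le, Fintype.card_fin]
    congr 1
    omega
  obtain ⟨P, hP0, hPk, hPS⟩ := exists_ne_zero_totalDegree_le_lowOrderCoeffs_eq_zero S (t + 1) k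
    (by rwa [hcard, Fintype.card_fin, mul_comm])
  exact ⟨P, hP0, hPk, fun a ha => vanishesWithMult_of_lowOrderCoeffs_eq_zero hPS ha⟩

theorem exists_poly_vanishing_with_multiplicity {F : Type} [Field F]
    (n m k : ℕ) (hn : 1 ≤ n) (hm : 1 ≤ m)
    (S : Finset (Fin n → F))
    (h : Nat.choose (m + n - 1) n * S.card < Nat.choose (n + k) n) :
    ∃ P : MvPolynomial (Fin n) F, P ≠ 0 ∧ P.totalDegree ≤ k ∧
      ∀ a ∈ S, VanishesWithMult P a m :=
  exists_poly_vanishing_with_multiplicity_general n m k hm S h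
end
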